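/- Let γ_min, γ_max > 0 and let B, B̃ ∈ ℝ^{m×r} satisfy γ_min·I ⪯ BᵀB ⪯ γ_max·I and γ_min·I ⪯ B̃ᵀB̃ ⪯ γ_max·I. Then ‖(BᵀB)⁻¹Bᵀ − (B̃ᵀB̃)⁻¹B̃ᵀ‖_F ≤ (1/γ_min + 2·γ_max/γ_min²) · ‖B − B̃‖_F. -/

import Mathlib

open Matrix

/-- Frobenius norm of a real matrix. -/
noncomputable def frobNorm {m n : ℕ} (A : Matrix (Fin m) (Fin n) ℝ) : ℝ :=
  Real.sqrt (∑ i, ∑ j, (A i j) ^ 2)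

/-!
Write `M = BᵀB`, `N = B̃ᵀB̃`, `Δ = B - B̃` and `Q = N⁻¹B̃ᵀ`. Since `B̃ᵀB̃Q = B̃ᵀ`,
`M⁻¹Bᵀ - Q = M⁻¹ (Δᵀ - B̃ᵀ Δ Q - Δᵀ B Q)` exactly. Every factor is bounded in the Loewner order:
`M⁻² ⪯ γmin⁻²`, `B̃B̃ᵀ ⪯ γmax`, `QQᵀ = N⁻¹ ⪯ γmin⁻¹` and `BQ(BQ)ᵀ = BN⁻¹Bᵀ ⪯ γmax/γmin`, and
`AᵀA ⪯ c` gives `‖AX‖_F ≤ √c ‖X‖_F`. This bounds the difference by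
`γmin⁻¹ (1 + 2 √(γmax/γmin)) ‖Δ‖_F`, and `√(γmax/γmin) ≤ γmax/γmin` because `γmin ≤ γmax`.
-/

open scoped MatrixOrder

attribute [local instance] Matrix.frobeniusNormedAddCommGroup

namespace Matrix

lemma posDef_of_smul_one_le {n : Type*} [DecidableEq n] {M : Matrix n n ℝ} {γ : ℝ} (hγ : 0 < γ)
    (h : γ • 1 ≤ M) : M.PosDef := by
  simpa using (PosDef.one.smul hγ).add_posSemidef (show (M - γ • 1).PosSemidef from h)

lemma le_of_smul_one_le_smul_one {n : Type*} [DecidableEq n] [Nonempty n] {a b : ℝ}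
    (h : a • (1 : Matrix n n ℝ) ≤ b • 1) : a ≤ b := by
  simpa using (show (b • (1 : Matrix n n ℝ) - a • 1).PosSemidef from h).diag_nonneg
    (i := Classical.arbitrary n)

variable {l m n : Type*} [Fintype l] [Fintype m] [Fintype n]

lemma frobenius_norm_eq_sqrt_trace (A : Matrix m n ℝ) : ‖A‖ = √(Aᵀ * A).trace := by
  rw [frobenius_norm_def, ← Real.sqrt_eq_rpow, trace, Finset.sum_comm]
  simp [mul_apply, sq]

lemma transpose_mul_mul_le_of_le {A B : Matrix m m ℝ} (h : A ≤ B) (X : Matrix m n ℝ) :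
    Xᵀ * A * X ≤ Xᵀ * B * X := by
  simpa [le_iff, ← Matrix.mul_sub, ← Matrix.sub_mul] using
    (le_iff.mp h).conjTranspose_mul_mul_same X

lemma mul_mul_transpose_le_of_le {A B : Matrix m m ℝ} (h : A ≤ B) (X : Matrix n m ℝ) :
    X * A * Xᵀ ≤ X * B * Xᵀ := by
  simpa using transpose_mul_mul_le_of_le h Xᵀ

lemma trace_le_trace_of_le {A B : Matrix n n ℝ} (h : A ≤ B) : A.trace ≤ B.trace := by
  simpa [trace_sub] using (le_iff.mp h).trace_nonneg

lemma frobenius_norm_mul_le_of_transpose_mul_le [DecidableEq m] {A : Matrix l m ℝ} {c : ℝ}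
    (h : Aᵀ * A ≤ c • 1) (X : Matrix m n ℝ) : ‖A * X‖ ≤ √c * ‖X‖ := by
  have htrace := trace_le_trace_of_le (transpose_mul_mul_le_of_le h X)
  rw [frobenius_norm_eq_sqrt_trace, frobenius_norm_eq_sqrt_trace,
    ← Real.sqrt_mul' _ (by simpa using (posSemidef_conjTranspose_mul_self X).trace_nonneg)]
  gcongr
  simpa [Matrix.mul_assoc, trace_smul] using htrace

lemma frobenius_norm_mul_le_of_mul_transpose_le [DecidableEq m] {A : Matrix m n ℝ} {c : ℝ}
    (h : A * Aᵀ ≤ c • 1) (X : Matrix l m ℝ) : ‖X * A‖ ≤ √c * ‖X‖ := by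
  simpa [← transpose_mul] using
    frobenius_norm_mul_le_of_transpose_mul_le (A := Aᵀ) (by simpa using h) Xᵀ

/-- `c (c - GGᵀ) = (c - GGᵀ)ᵀ (c - GGᵀ) + G (c - GᵀG) Gᵀ` is a sum of positive semidefinite
matrices. -/
lemma mul_transpose_le_of_transpose_mul_le [DecidableEq m] [DecidableEq n] {G : Matrix m n ℝ}
    {c : ℝ} (hc : 0 < c) (h : Gᵀ * G ≤ c • 1) : G * Gᵀ ≤ c • 1 := by
  set P := c • (1 : Matrix m m ℝ) - G * Gᵀ
  have hP : Pᵀ = P := by simp [P]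
  have hsum : (Pᵀ * P + G * (c • 1 - Gᵀ * G) * Gᵀ).PosSemidef :=
    (by simpa using posSemidef_conjTranspose_mul_self P : (Pᵀ * P).PosSemidef).add
      (by simpa using (le_iff.mp h).mul_mul_conjTranspose_same G)
  have e : Pᵀ * P + G * (c • 1 - Gᵀ * G) * Gᵀ = c • P := by
    rw [hP]
    simp only [P, Matrix.mul_sub, Matrix.sub_mul, Matrix.mul_smul, Matrix.smul_mul,
      Matrix.mul_one, Matrix.one_mul, smul_sub, smul_smul, Matrix.mul_assoc]
    abel
  rw [e] at hsum
  simpa [le_iff, P, smul_smul, hc.ne'] using hsum.smul (inv_nonneg.mpr hc.le)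

variable [DecidableEq n]

lemma mul_self_le_of_le_smul_one {M : Matrix n n ℝ} {c : ℝ} (hM : 0 ≤ M) (hc : 0 ≤ c)
    (h : M ≤ c • 1) : M * M ≤ c ^ 2 • 1 := by
  have hcomm : Commute (c • 1 - M) (c • 1 + M) := by
    simp only [Commute, SemiconjBy, Matrix.mul_add, Matrix.add_mul, Matrix.sub_mul,
      Matrix.mul_sub, Matrix.smul_mul, Matrix.mul_smul, Matrix.one_mul, Matrix.mul_one,
      smul_add, smul_sub]
    abel
  have e : (c • 1 - M) * (c • 1 + M) = c ^ 2 • 1 - M * M := by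
    simp only [Matrix.mul_add, Matrix.sub_mul, Matrix.smul_mul, Matrix.mul_smul,
      Matrix.one_mul, Matrix.mul_one, smul_sub, smul_smul, sq]
    abel
  rw [← sub_nonneg, ← e]
  exact hcomm.mul_nonneg (sub_nonneg.mpr h)
    (add_nonneg (PosSemidef.one.smul hc).nonneg hM)

lemma inv_le_of_smul_one_le {M : Matrix n n ℝ} {γ : ℝ} (hγ : 0 < γ) (h : γ • 1 ≤ M) :
    M⁻¹ ≤ γ⁻¹ • 1 := by
  have hM := posDef_of_smul_one_le hγ h
  have hinv : M⁻¹ * M = 1 := nonsing_inv_mul M ((isUnit_iff_isUnit_det M).mp hM.isUnit)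
  have hinv' : M * M⁻¹ = 1 := mul_nonsing_inv M ((isUnit_iff_isUnit_det M).mp hM.isUnit)
  have hcomm : Commute M⁻¹ (M - γ • 1) := by
    simp only [Commute, SemiconjBy, Matrix.mul_sub, Matrix.sub_mul, Matrix.mul_smul,
      Matrix.smul_mul, Matrix.one_mul, Matrix.mul_one, hinv, hinv']
  have e : γ⁻¹ • (M⁻¹ * (M - γ • 1)) = γ⁻¹ • 1 - M⁻¹ := by
    rw [Matrix.mul_sub, hinv, Matrix.mul_smul, Matrix.mul_one, smul_sub, smul_smul,
      inv_mul_cancel₀ hγ.ne', one_smul]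
  rw [le_iff, ← e]
  exact (hcomm.mul_nonneg hM.inv.posSemidef.nonneg (sub_nonneg.mpr h)).posSemidef.smul
    (inv_nonneg.mpr hγ.le)

/-- The Moore–Penrose pseudoinverse when `BᵀB` is invertible; otherwise `⁻¹` returns `0`. -/
noncomputable def pinv (B : Matrix m n ℝ) : Matrix n m ℝ := (Bᵀ * B)⁻¹ * Bᵀ

lemma transpose_mul_self_mul_pinv {B : Matrix m n ℝ} (h : IsUnit (Bᵀ * B).det) :
    Bᵀ * B * pinv B = Bᵀ := by
  rw [pinv, ← Matrix.mul_assoc, mul_nonsing_inv _ h, Matrix.one_mul]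

lemma pinv_mul_transpose_pinv {B : Matrix m n ℝ} (h : IsUnit (Bᵀ * B).det) :
    pinv B * (pinv B)ᵀ = (Bᵀ * B)⁻¹ := by
  rw [pinv, transpose_mul, transpose_nonsing_inv, transpose_mul, transpose_transpose,
    Matrix.mul_assoc, ← Matrix.mul_assoc Bᵀ, mul_nonsing_inv _ h, Matrix.mul_one]

lemma pinv_sub_pinv {B B' : Matrix m n ℝ} (h : IsUnit (Bᵀ * B).det)
    (h' : IsUnit (B'ᵀ * B').det) :
    pinv B - pinv B' = (Bᵀ * B)⁻¹ * (B - B')ᵀ - (Bᵀ * B)⁻¹ * (B'ᵀ * ((B - B') * pinv B'))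
      - (Bᵀ * B)⁻¹ * ((B - B')ᵀ * (B * pinv B')) := by
  have hB' : B'ᵀ * (B' * pinv B') = B'ᵀ := by
    rw [← Matrix.mul_assoc, transpose_mul_self_mul_pinv h']
  have hB : (Bᵀ * B)⁻¹ * (Bᵀ * (B * pinv B')) = pinv B' := by
    rw [← Matrix.mul_assoc Bᵀ, nonsing_inv_mul_cancel_left _ _ h]
  simp only [transpose_sub, Matrix.sub_mul, Matrix.mul_sub, hB, hB']
  rw [pinv]
  abel

variable [DecidableEq m]

theorem norm_pinv_sub_pinv_le {γmin γmax : ℝ} (hγmin : 0 < γmin) (hγmax : 0 < γmax)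
    {B B' : Matrix m n ℝ} (hB₁ : γmin • 1 ≤ Bᵀ * B) (hB₂ : Bᵀ * B ≤ γmax • 1)
    (hB₁' : γmin • 1 ≤ B'ᵀ * B') (hB₂' : B'ᵀ * B' ≤ γmax • 1) :
    ‖pinv B - pinv B'‖ ≤ γmin⁻¹ * (1 + 2 * √(γmax / γmin)) * ‖B - B'‖ := by
  have hM := posDef_of_smul_one_le hγmin hB₁
  have hN := posDef_of_smul_one_le hγmin hB₁'
  have hMdet := (isUnit_iff_isUnit_det _).mp hM.isUnit
  have hNdet := (isUnit_iff_isUnit_det _).mp hN.isUnit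
  have hγinv : 0 ≤ γmin⁻¹ := inv_nonneg.mpr hγmin.le
  have hMinv : (Bᵀ * B)⁻¹ᵀ * (Bᵀ * B)⁻¹ ≤ γmin⁻¹ ^ 2 • 1 := by
    rw [transpose_nonsing_inv, transpose_mul, transpose_transpose]
    exact mul_self_le_of_le_smul_one hM.inv.posSemidef.nonneg hγinv
      (inv_le_of_smul_one_le hγmin hB₁)
  have hQ : pinv B' * (pinv B')ᵀ ≤ γmin⁻¹ • 1 :=
    pinv_mul_transpose_pinv hNdet ▸ inv_le_of_smul_one_le hγmin hB₁'
  have hB'T : (B'ᵀ)ᵀ * B'ᵀ ≤ γmax • 1 := by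
    simpa using mul_transpose_le_of_transpose_mul_le hγmax hB₂'
  have hBQ : B * pinv B' * (B * pinv B')ᵀ ≤ (γmin⁻¹ * γmax) • 1 :=
    calc B * pinv B' * (B * pinv B')ᵀ = B * (pinv B' * (pinv B')ᵀ) * Bᵀ := by
          simp only [transpose_mul, Matrix.mul_assoc]
      _ ≤ B * (γmin⁻¹ • 1) * Bᵀ := mul_mul_transpose_le_of_le hQ B
      _ = γmin⁻¹ • (B * Bᵀ) := by simp
      _ ≤ γmin⁻¹ • (γmax • 1) :=
          smul_le_smul_of_nonneg_left (mul_transpose_le_of_transpose_mul_le hγmax hB₂) hγinv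
      _ = (γmin⁻¹ * γmax) • 1 := smul_smul _ _ _
  set M := Bᵀ * B
  set Δ := B - B'
  have h₁ : ‖M⁻¹ * Δᵀ‖ ≤ γmin⁻¹ * ‖Δ‖ := by
    grw [frobenius_norm_mul_le_of_transpose_mul_le hMinv, Real.sqrt_sq hγinv,
      frobenius_norm_transpose]
  have h₂ : ‖M⁻¹ * (B'ᵀ * (Δ * pinv B'))‖ ≤ γmin⁻¹ * (√γmax * (√γmin⁻¹ * ‖Δ‖)) := by
    grw [frobenius_norm_mul_le_of_transpose_mul_le hMinv, Real.sqrt_sq hγinv,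
      frobenius_norm_mul_le_of_transpose_mul_le hB'T,
      frobenius_norm_mul_le_of_mul_transpose_le hQ]
  have h₃ : ‖M⁻¹ * (Δᵀ * (B * pinv B'))‖ ≤ γmin⁻¹ * (√(γmin⁻¹ * γmax) * ‖Δ‖) := by
    grw [frobenius_norm_mul_le_of_transpose_mul_le hMinv, Real.sqrt_sq hγinv,
      frobenius_norm_mul_le_of_mul_transpose_le hBQ, frobenius_norm_transpose]
  have hs : √γmax * √γmin⁻¹ = √(γmax / γmin) := by
    rw [← Real.sqrt_mul hγmax.le, div_eq_mul_inv]
  have hs' : √(γmin⁻¹ * γmax) = √(γmax / γmin) := by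
    rw [div_eq_inv_mul]
  rw [pinv_sub_pinv hMdet hNdet]
  calc _ ≤ ‖M⁻¹ * Δᵀ‖ + ‖M⁻¹ * (B'ᵀ * (Δ * pinv B'))‖ + ‖M⁻¹ * (Δᵀ * (B * pinv B'))‖ :=
        (norm_sub_le _ _).trans (by gcongr; exact norm_sub_le _ _)
    _ ≤ γmin⁻¹ * ‖Δ‖ + γmin⁻¹ * (√γmax * (√γmin⁻¹ * ‖Δ‖))
        + γmin⁻¹ * (√(γmin⁻¹ * γmax) * ‖Δ‖) := by gcongr
    _ = _ := by
      rw [← mul_assoc √γmax, hs, hs']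
      ring

end Matrix

lemma frobNorm_eq_norm {m n : ℕ} (A : Matrix (Fin m) (Fin n) ℝ) : frobNorm A = ‖A‖ := by
  rw [frobenius_norm_def, frobNorm, Real.sqrt_eq_rpow]
  simp

theorem pseudoinverse_lipschitz_general {m r : ℕ}
    (γmin γmax : ℝ) (hγmin : 0 < γmin)
    (B Bt : Matrix (Fin m) (Fin r) ℝ)
    (hB1 : (Bᵀ * B - γmin • (1 : Matrix (Fin r) (Fin r) ℝ)).PosSemidef)
    (hB2 : (γmax • (1 : Matrix (Fin r) (Fin r) ℝ) - Bᵀ * B).PosSemidef)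
    (hB1t : (Btᵀ * Bt - γmin • (1 : Matrix (Fin r) (Fin r) ℝ)).PosSemidef)
    (hB2t : (γmax • (1 : Matrix (Fin r) (Fin r) ℝ) - Btᵀ * Bt).PosSemidef) :
    frobNorm ((Bᵀ * B)⁻¹ * Bᵀ - (Btᵀ * Bt)⁻¹ * Btᵀ)
      ≤ (1 / γmin + 2 * γmax / γmin ^ 2) * frobNorm (B - Bt) := by
  rw [frobNorm_eq_norm, frobNorm_eq_norm]
  rcases isEmpty_or_nonempty (Fin r) with _ | _
  · rw [Subsingleton.elim (B - Bt) 0,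
      Subsingleton.elim ((Bᵀ * B)⁻¹ * Bᵀ - (Btᵀ * Bt)⁻¹ * Btᵀ) 0]
    simp
  have hγ : γmin ≤ γmax := Matrix.le_of_smul_one_le_smul_one (le_trans hB1 hB2)
  have hratio : √(γmax / γmin) ≤ γmax / γmin :=
    Real.sqrt_le_self_iff.mpr (Or.inr ((one_le_div hγmin).mpr hγ))
  calc _ ≤ γmin⁻¹ * (1 + 2 * √(γmax / γmin)) * ‖B - Bt‖ :=
        Matrix.norm_pinv_sub_pinv_le hγmin (hγmin.trans_le hγ) hB1 hB2 hB1t hB2t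
    _ ≤ γmin⁻¹ * (1 + 2 * (γmax / γmin)) * ‖B - Bt‖ := by gcongr
    _ = _ := by
      field_simp

/-- Lipschitz continuity of the pseudoinverse `B ↦ (BᵀB)⁻¹Bᵀ` under
two-sided eigenvalue bounds on `BᵀB`. -/
theorem pseudoinverse_lipschitz {m r : ℕ}
    (γmin γmax : ℝ) (hγmin : 0 < γmin) (hγmax : 0 < γmax)
    (B Bt : Matrix (Fin m) (Fin r) ℝ)
    (hB1 : (Bᵀ * B - γmin • (1 : Matrix (Fin r) (Fin r) ℝ)).PosSemidef)
    (hB2 : (γmax • (1 : Matrix (Fin r) (Fin r) ℝ) - Bᵀ * B).PosSemidef)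
    (hB1t : (Btᵀ * Bt - γmin • (1 : Matrix (Fin r) (Fin r) ℝ)).PosSemidef)
    (hB2t : (γmax • (1 : Matrix (Fin r) (Fin r) ℝ) - Btᵀ * Bt).PosSemidef) :
    frobNorm ((Bᵀ * B)⁻¹ * Bᵀ - (Btᵀ * Bt)⁻¹ * Btᵀ)
      ≤ (1 / γmin + 2 * γmax / γmin ^ 2) * frobNorm (B - Bt) :=
  pseudoinverse_lipschitz_general γmin γmax hγmin B Bt hB1 hB2 hB1t hB2t
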